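/- Let d = 2 and θ : ℝ² → [0,∞) with ∫θ = M < 8π, finite second moment, and θ log θ ∈ L¹. Suppose the modified free energy satisfies G(θ) := ∫ θ log θ dη + (1/2)∫|η|²θ dη − (1/4π)∫∫ θ(η)θ(ζ) log|η−ζ| dη dζ ≤ G₀. Then there exists C = C(M, G₀) such that ∫ (θ log θ)₊ dη ≤ C. -/
import Mathlib


open MeasureTheory

lemma gauss_int_aux :
    Integrable (fun η : EuclideanSpace ℝ (Fin 2) => Real.exp (-(‖η‖ ^ 2 / 4))) := by
  have h := (GaussianFourier.integrable_cexp_neg_mul_sq_norm_add (V := EuclideanSpace ℝ (Fin 2))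
    (b := ((1 : ℂ) / 4)) (by norm_num) 0 0).norm
  have h2 : Integrable (fun η : EuclideanSpace ℝ (Fin 2) => Real.exp (-(1 / 4) * ‖η‖ ^ 2)) := by
    simpa [Complex.norm_exp, ← Complex.ofReal_pow] using h
  have heq : (fun η : EuclideanSpace ℝ (Fin 2) => Real.exp (-(‖η‖ ^ 2 / 4)))
      = fun η : EuclideanSpace ℝ (Fin 2) => Real.exp (-(1 / 4) * ‖η‖ ^ 2) := by
    funext η; congr 1; ring
  rw [heq]; exact h2

lemma aux_log_le {δ : ℝ} (hδ : 0 < δ) (x : ℝ) (hx : 0 ≤ x) :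
    Real.log x ≤ δ * x ^ 2 + 1 / (4 * δ) := by
  rcases eq_or_lt_of_le hx with h | h
  · simp [← h]; positivity
  · have h1 := Real.log_le_sub_one_of_pos h
    have h4 : (0 : ℝ) < 4 * δ := by linarith
    have h2 : x - δ * x ^ 2 ≤ 1 / (4 * δ) := by
      rw [le_div_iff₀ h4]; nlinarith [sq_nonneg (2 * δ * x - 1)]
    linarith

lemma aux_ent {s a : ℝ} (hs : 0 ≤ s) :
    -(a * s + Real.exp (-a)) ≤ s * Real.log s := by
  rcases eq_or_lt_of_le hs with h | h
  · simp [← h]; positivity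
  · have hu : 0 < s * Real.exp a := by positivity
    have key : -1 ≤ (s * Real.exp a) * Real.log (s * Real.exp a) := by
      have h1 := Real.log_le_sub_one_of_pos (show (0 : ℝ) < (s * Real.exp a)⁻¹ by positivity)
      rw [Real.log_inv] at h1
      have h2 := mul_le_mul_of_nonneg_left h1 hu.le
      nlinarith [mul_inv_cancel₀ (ne_of_gt hu)]
    have hlog : Real.log (s * Real.exp a) = Real.log s + a := by
      rw [Real.log_mul (ne_of_gt h) (Real.exp_ne_zero a), Real.log_exp]
    rw [hlog] at key
    have hea : 0 < Real.exp (-a) := Real.exp_pos _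
    have hse : Real.exp (-a) * (s * Real.exp a) = s := by
      rw [Real.exp_neg]; field_simp
    have h3 : -Real.exp (-a) ≤ s * (Real.log s + a) := by
      calc -Real.exp (-a) = Real.exp (-a) * -1 := by ring
        _ ≤ Real.exp (-a) * ((s * Real.exp a) * (Real.log s + a)) :=
            mul_le_mul_of_nonneg_left key hea.le
        _ = (Real.exp (-a) * (s * Real.exp a)) * (Real.log s + a) := by ring
        _ = s * (Real.log s + a) := by rw [hse]
    nlinarith [h3]

/-- Uniform equi-integrability bound in self-similar variables: in `d = 2`,
subcritical mass `M < 8π` and a bound on the modified free energy `G(θ) ≤ G₀`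
give a uniform bound on `∫ (θ log θ)₊`. -/
theorem modified_free_energy_equiintegrability :
    ∃ C : ℝ → ℝ → ℝ, ∀ (θ : EuclideanSpace ℝ (Fin 2) → ℝ) (M G₀ : ℝ),
      (∀ η, 0 ≤ θ η) → Integrable θ → (∫ η, θ η) = M →
      0 < M → M < 8 * Real.pi →
      Integrable (fun η => ‖η‖ ^ 2 * θ η) →
      Integrable (fun η => θ η * Real.log (θ η)) →
      Integrable (fun η => θ η * ∫ ζ, θ ζ * Real.log ‖η - ζ‖) →
      (∫ η, θ η * Real.log (θ η)) + (1 / 2) * (∫ η, ‖η‖ ^ 2 * θ η)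
          - (1 / (4 * Real.pi)) * (∫ η, θ η * ∫ ζ, θ ζ * Real.log ‖η - ζ‖) ≤ G₀ →
      (∫ η, max (θ η * Real.log (θ η)) 0) ≤ C M G₀ := by
  classical
  refine ⟨fun M G₀ => G₀ + M ^ 3 / (2 * Real.pi ^ 2)
      + (∫ η : EuclideanSpace ℝ (Fin 2), Real.exp (-(‖η‖ ^ 2 / 4))), ?_⟩
  intro θ M G₀ hθ hθint hMeq hM0 hM8 hM2int hEint hIint hG
  have hπ : (0 : ℝ) < Real.pi := Real.pi_pos
  set κ : ℝ := ∫ η : EuclideanSpace ℝ (Fin 2), Real.exp (-(‖η‖ ^ 2 / 4)) with hκdef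
  set δ : ℝ := Real.pi / (8 * M) with hδdef
  have hδ : 0 < δ := by rw [hδdef]; positivity
  set M₂ : ℝ := ∫ η : EuclideanSpace ℝ (Fin 2), ‖η‖ ^ 2 * θ η with hM₂def
  set E : ℝ := ∫ η : EuclideanSpace ℝ (Fin 2), θ η * Real.log (θ η) with hEdef
  set Iq : ℝ := ∫ η : EuclideanSpace ℝ (Fin 2), θ η * ∫ ζ, θ ζ * Real.log ‖η - ζ‖ with hIqdef
  have hM₂0 : 0 ≤ M₂ := by
    rw [hM₂def]
    exact integral_nonneg fun η => mul_nonneg (sq_nonneg _) (hθ η)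
  -- Step 1: pointwise bound on the inner logarithmic integral
  have inner_bd : ∀ η : EuclideanSpace ℝ (Fin 2),
      (∫ ζ, θ ζ * Real.log ‖η - ζ‖) ≤ (2 * δ * ‖η‖ ^ 2 + 1 / (4 * δ)) * M + 2 * δ * M₂ := by
    intro η
    have hRHSnn : 0 ≤ (2 * δ * ‖η‖ ^ 2 + 1 / (4 * δ)) * M + 2 * δ * M₂ := by
      have h1 : 0 ≤ (2 * δ * ‖η‖ ^ 2 + 1 / (4 * δ)) * M := by positivity
      nlinarith
    by_cases hg : Integrable (fun ζ : EuclideanSpace ℝ (Fin 2) => θ ζ * Real.log ‖η - ζ‖)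
    · have hb : Integrable (fun ζ : EuclideanSpace ℝ (Fin 2) =>
          θ ζ * (2 * δ * ‖η‖ ^ 2 + 1 / (4 * δ)) + 2 * δ * (‖ζ‖ ^ 2 * θ ζ)) :=
        (hθint.mul_const _).add (hM2int.const_mul _)
      have hle : ∀ ζ : EuclideanSpace ℝ (Fin 2), θ ζ * Real.log ‖η - ζ‖ ≤
          θ ζ * (2 * δ * ‖η‖ ^ 2 + 1 / (4 * δ)) + 2 * δ * (‖ζ‖ ^ 2 * θ ζ) := by
        intro ζ
        have h1 : Real.log ‖η - ζ‖ ≤ δ * ‖η - ζ‖ ^ 2 + 1 / (4 * δ) :=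
          aux_log_le hδ _ (norm_nonneg _)
        have h2 : ‖η - ζ‖ ^ 2 ≤ 2 * ‖η‖ ^ 2 + 2 * ‖ζ‖ ^ 2 := by
          have h := norm_sub_le η ζ
          nlinarith [norm_nonneg η, norm_nonneg ζ, norm_nonneg (η - ζ), sq_nonneg (‖η‖ - ‖ζ‖),
            mul_self_le_mul_self (norm_nonneg (η - ζ)) h]
        have h3 : Real.log ‖η - ζ‖ ≤ 2 * δ * ‖η‖ ^ 2 + 1 / (4 * δ) + 2 * δ * ‖ζ‖ ^ 2 := by
          nlinarith
        calc θ ζ * Real.log ‖η - ζ‖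
            ≤ θ ζ * (2 * δ * ‖η‖ ^ 2 + 1 / (4 * δ) + 2 * δ * ‖ζ‖ ^ 2) :=
              mul_le_mul_of_nonneg_left h3 (hθ ζ)
          _ = θ ζ * (2 * δ * ‖η‖ ^ 2 + 1 / (4 * δ)) + 2 * δ * (‖ζ‖ ^ 2 * θ ζ) := by ring
      calc (∫ ζ, θ ζ * Real.log ‖η - ζ‖)
          ≤ ∫ ζ, (θ ζ * (2 * δ * ‖η‖ ^ 2 + 1 / (4 * δ)) + 2 * δ * (‖ζ‖ ^ 2 * θ ζ)) :=
            integral_mono hg hb hle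
        _ = (2 * δ * ‖η‖ ^ 2 + 1 / (4 * δ)) * M + 2 * δ * M₂ := by
            rw [integral_add (hθint.mul_const _) (hM2int.const_mul _),
              integral_mul_const, integral_const_mul, hMeq, ← hM₂def]
            ring
    · rw [integral_undef hg]; exact hRHSnn
  -- Step 2: bound on the double logarithmic integral
  have hIq : Iq ≤ 2 * δ * M * M₂ + ((1 / (4 * δ)) * M + 2 * δ * M₂) * M := by
    have hb : Integrable (fun η : EuclideanSpace ℝ (Fin 2) =>
        (2 * δ * M) * (‖η‖ ^ 2 * θ η) + ((1 / (4 * δ)) * M + 2 * δ * M₂) * θ η) :=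
      (hM2int.const_mul _).add (hθint.const_mul _)
    have hle : ∀ η : EuclideanSpace ℝ (Fin 2),
        θ η * (∫ ζ, θ ζ * Real.log ‖η - ζ‖) ≤
        (2 * δ * M) * (‖η‖ ^ 2 * θ η) + ((1 / (4 * δ)) * M + 2 * δ * M₂) * θ η := by
      intro η
      calc θ η * (∫ ζ, θ ζ * Real.log ‖η - ζ‖)
          ≤ θ η * ((2 * δ * ‖η‖ ^ 2 + 1 / (4 * δ)) * M + 2 * δ * M₂) :=
            mul_le_mul_of_nonneg_left (inner_bd η) (hθ η)
        _ = (2 * δ * M) * (‖η‖ ^ 2 * θ η) + ((1 / (4 * δ)) * M + 2 * δ * M₂) * θ η := by ring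
    calc Iq ≤ ∫ η : EuclideanSpace ℝ (Fin 2),
          ((2 * δ * M) * (‖η‖ ^ 2 * θ η) + ((1 / (4 * δ)) * M + 2 * δ * M₂) * θ η) :=
          integral_mono hIint hb hle
      _ = 2 * δ * M * M₂ + ((1 / (4 * δ)) * M + 2 * δ * M₂) * M := by
          rw [integral_add (hM2int.const_mul _) (hθint.const_mul _),
            integral_const_mul, integral_const_mul, hMeq, ← hM₂def]
  -- Step 3: bound the positive part pointwise
  have hpos : (∫ η, max (θ η * Real.log (θ η)) 0)
      ≤ E + (1 / 4 * M₂ + κ) := by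
    have hb : Integrable (fun η : EuclideanSpace ℝ (Fin 2) =>
        θ η * Real.log (θ η) + ((1 / 4) * (‖η‖ ^ 2 * θ η) + Real.exp (-(‖η‖ ^ 2 / 4)))) :=
      hEint.add ((hM2int.const_mul _).add gauss_int_aux)
    have hle : ∀ η : EuclideanSpace ℝ (Fin 2),
        max (θ η * Real.log (θ η)) 0 ≤
        θ η * Real.log (θ η) + ((1 / 4) * (‖η‖ ^ 2 * θ η) + Real.exp (-(‖η‖ ^ 2 / 4))) := by
      intro η
      have hent := aux_ent (s := θ η) (a := ‖η‖ ^ 2 / 4) (hθ η)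
      have hterm : ‖η‖ ^ 2 / 4 * θ η = 1 / 4 * (‖η‖ ^ 2 * θ η) := by ring
      have hnn : 0 ≤ θ η * Real.log (θ η)
          + ((1 / 4) * (‖η‖ ^ 2 * θ η) + Real.exp (-(‖η‖ ^ 2 / 4))) := by linarith
      have hself : θ η * Real.log (θ η) ≤ θ η * Real.log (θ η)
          + ((1 / 4) * (‖η‖ ^ 2 * θ η) + Real.exp (-(‖η‖ ^ 2 / 4))) := by
        have : 0 ≤ (1 / 4) * (‖η‖ ^ 2 * θ η) + Real.exp (-(‖η‖ ^ 2 / 4)) := by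
          have := mul_nonneg (sq_nonneg ‖η‖) (hθ η)
          have := Real.exp_pos (-(‖η‖ ^ 2 / 4))
          linarith
        linarith
      exact max_le hself hnn
    calc (∫ η, max (θ η * Real.log (θ η)) 0)
        ≤ ∫ η : EuclideanSpace ℝ (Fin 2), (θ η * Real.log (θ η)
            + ((1 / 4) * (‖η‖ ^ 2 * θ η) + Real.exp (-(‖η‖ ^ 2 / 4)))) :=
          integral_mono hEint.pos_part hb hle
      _ = E + (1 / 4 * M₂ + κ) := by
          have hb2 : Integrable (fun η : EuclideanSpace ℝ (Fin 2) =>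
              (1 : ℝ) / 4 * (‖η‖ ^ 2 * θ η) + Real.exp (-(‖η‖ ^ 2 / 4))) :=
            (hM2int.const_mul ((1:ℝ)/4)).add gauss_int_aux
          rw [integral_add hEint hb2,
            integral_add (hM2int.const_mul ((1:ℝ)/4)) gauss_int_aux, integral_const_mul,
            ← hEdef, ← hM₂def, ← hκdef]
  -- Step 4: arithmetic
  have hκ0 : 0 ≤ κ := by
    rw [hκdef]; exact integral_nonneg fun η => (Real.exp_pos _).le
  have hMne : M ≠ 0 := ne_of_gt hM0
  have hπne : Real.pi ≠ 0 := ne_of_gt hπ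
  have h2 : 2 * δ * M * M₂ + ((1 / (4 * δ)) * M + 2 * δ * M₂) * M
      = Real.pi / 2 * M₂ + 2 * M ^ 3 / Real.pi := by
    rw [hδdef]; field_simp; ring
  have h3 : 1 / (4 * Real.pi) * Iq ≤ 1 / 8 * M₂ + M ^ 3 / (2 * Real.pi ^ 2) := by
    have hpos4 : (0 : ℝ) < 1 / (4 * Real.pi) := by positivity
    have := mul_le_mul_of_nonneg_left hIq hpos4.le
    rw [h2] at this
    have heq : 1 / (4 * Real.pi) * (Real.pi / 2 * M₂ + 2 * M ^ 3 / Real.pi)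
        = 1 / 8 * M₂ + M ^ 3 / (2 * Real.pi ^ 2) := by
      field_simp; ring
    linarith [heq ▸ this]
  linarith [hpos, hG, h3, hM₂0]
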